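/- Let G be a finite group and let ℓ be the maximal order of an element of G. Then for every n and every generating symbol (H, Y, β) of SC_n(G) whose character sequence β has length r(β) ≤ n − ℓ, the class of (H, Y, β) in the combinatorial Burnside group BC_n(G) is zero; in particular the submodule BC_{n,r}(G) ⊆ BC_n(G) generated by reduced symbols with r(β) ≤ r vanishes for all 1 ≤ r ≤ n − ℓ. -/

import Mathlib

open scoped Classical

noncomputable section

namespace CBG

/-- The character group `A^∨ = Hom(A, ℂ^×)` of a group `A`, written additively. -/
abbrev Ch (A : Type*) [Group A] : Type _ := Additive (A →* ℂˣ)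

/-- A multiset of characters generates the character group. -/
def gens {A : Type*} [Group A] (β : Multiset (Ch A)) : Prop :=
  AddSubgroup.closure {b | b ∈ β} = ⊤

variable (G : Type*) [Group G]

/-- Generating symbols `(H, Y, β)` of the combinatorial symbols group `SC_n(G)`:
`H ⊆ G` abelian, `H ⊆ Y ⊆ Z_G(H)`, and `β` a multiset (= sequence modulo the
reordering relation (O)) of nontrivial characters of `H`, of length `1 ≤ r ≤ n`,
generating `H^∨`. -/
structure Symbol (n : ℕ) where
  H : Subgroup G
  Y : Subgroup G
  habelian : IsMulCommutative H
  hHY : H ≤ Y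
  hYC : Y ≤ Subgroup.centralizer (H : Set G)
  β : Multiset (Ch H)
  hcard₁ : 1 ≤ Multiset.card β
  hcard₂ : Multiset.card β ≤ n
  hne : ∀ b ∈ β, b ≠ 0
  hgen : gens β

/-- The combinatorial symbols group `SC_n(G)`: the free `ℤ`-module on the symbols. -/
abbrev SC (n : ℕ) : Type _ := Symbol G n →₀ ℤ

/-- The symbol `(H, Y, β)` as an element of `SC_n(G)`, with the convention that
an invalid symbol (in particular, one whose character sequence contains the
trivial character) is `0`. -/
def mkSC (n : ℕ) (H Y : Subgroup G) (β : Multiset (Ch H)) : SC G n :=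
  if h : IsMulCommutative H ∧ H ≤ Y ∧ Y ≤ Subgroup.centralizer (H : Set G) ∧
      1 ≤ Multiset.card β ∧ Multiset.card β ≤ n ∧ (∀ b ∈ β, b ≠ 0) ∧ gens β then
    Finsupp.single ⟨H, Y, h.1, h.2.1, h.2.2.1, β, h.2.2.2.1, h.2.2.2.2.1,
      h.2.2.2.2.2.1, h.2.2.2.2.2.2⟩ 1
  else 0

/-- Restriction of a character to a smaller subgroup. -/
def resCh {H K : Subgroup G} (h : K ≤ H) (b : Ch H) : Ch K :=
  Additive.ofMul ((Additive.toMul b).comp (Subgroup.inclusion h))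

/-- The conjugate subgroup `gHg⁻¹`. -/
def conjSub (g : G) (H : Subgroup G) : Subgroup G :=
  Subgroup.map (MulAut.conj g : G ≃* G) H

/-- Transport of a character of `H` to a character of `K = gHg⁻¹` along conjugation by `g`. -/
def conjChTo {H K : Subgroup G} (g : G) (hK : conjSub G g H = K) (b : Ch H) : Ch K :=
  Additive.ofMul ((Additive.toMul b).comp
    (((MulEquiv.subgroupMap (MulAut.conj g : G ≃* G) H).trans
      (MulEquiv.subgroupCongr hK)).symm.toMonoidHom))

/-- Relation (C): conjugation. -/
def relC (n : ℕ) : Set (SC G n) :=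
  {x | ∃ (s : Symbol G n) (g : G),
    x = Finsupp.single s 1 -
        mkSC G n (conjSub G g s.H) (conjSub G g s.Y) (s.β.map (conjChTo G g rfl))}

/-- Relation (V): vanishing. -/
def relV (n : ℕ) : Set (SC G n) :=
  {x | ∃ s : Symbol G n,
    (s.H = ⊥ ∨ ∃ (b₁ b₂ : Ch s.H) (rest : Multiset (Ch s.H)),
      s.β = b₁ ::ₘ b₂ ::ₘ rest ∧ b₁ + b₂ = 0) ∧
    x = Finsupp.single s 1}

/-- Relation (B2): blowup. -/
def relB2 (n : ℕ) : Set (SC G n) :=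
  {x | ∃ (s : Symbol G n) (b₁ b₂ : Ch s.H) (rest : Multiset (Ch s.H)),
    s.β = b₁ ::ₘ b₂ ::ₘ rest ∧
    ((b₁ = b₂ ∧ x = Finsupp.single s 1 - mkSC G n s.H s.Y (b₂ ::ₘ rest)) ∨
     (b₁ ≠ b₂ ∧ (∃ b ∈ s.β, b ∈ AddSubgroup.zmultiples (b₁ - b₂)) ∧
        x = Finsupp.single s 1 - mkSC G n s.H s.Y ((b₁ - b₂) ::ₘ b₂ ::ₘ rest)
            - mkSC G n s.H s.Y (b₁ ::ₘ (b₂ - b₁) ::ₘ rest)) ∨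
     (b₁ ≠ b₂ ∧ ¬(∃ b ∈ s.β, b ∈ AddSubgroup.zmultiples (b₁ - b₂)) ∧
        x = Finsupp.single s 1 - mkSC G n s.H s.Y ((b₁ - b₂) ::ₘ b₂ ::ₘ rest)
            - mkSC G n s.H s.Y (b₁ ::ₘ (b₂ - b₁) ::ₘ rest)
            - mkSC G n (Subgroup.map s.H.subtype (MonoidHom.ker (Additive.toMul (b₁ - b₂))))
                s.Y (s.β.map (resCh G (Subgroup.map_subtype_le _)))))}

/-- Relation (B2'): modified blowup. -/
def relB2' (n : ℕ) : Set (SC G n) :=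
  {x | ∃ (s : Symbol G n) (b₁ b₂ : Ch s.H) (rest : Multiset (Ch s.H)),
    s.β = b₁ ::ₘ b₂ ::ₘ rest ∧
    ((b₁ = b₂ ∧ x = Finsupp.single s 1 - mkSC G n s.H s.Y (b₂ ::ₘ rest)) ∨
     (b₁ ≠ b₂ ∧
        x = Finsupp.single s 1 - mkSC G n s.H s.Y ((b₁ - b₂) ::ₘ b₂ ::ₘ rest)
            - mkSC G n s.H s.Y (b₁ ::ₘ (b₂ - b₁) ::ₘ rest)))}

/-- The combinatorial Burnside group `BC_n(G)`. -/
abbrev BC (n : ℕ) : Type _ :=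
  SC G n ⧸ Submodule.span ℤ (relC G n ∪ relV G n ∪ relB2 G n)

/-- The group `BC'_n(G)`. -/
abbrev BC' (n : ℕ) : Type _ :=
  SC G n ⧸ Submodule.span ℤ (relC G n ∪ relV G n ∪ relB2' G n)

/-- Projection `SC_n(G) → BC_n(G)`. -/
def BCmk (n : ℕ) : SC G n →ₗ[ℤ] BC G n :=
  Submodule.mkQ _

/-- Projection `SC_n(G) → BC'_n(G)`. -/
def BC'mk (n : ℕ) : SC G n →ₗ[ℤ] BC' G n :=
  Submodule.mkQ _

end CBG

/-! Pick `b ∈ β` and let `m` be its order, so `2 ≤ m ≤ ℓ`. Relation (B2) for the pair `(b, b)`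
lets us add `b` to `β`, and blowing up a pair `((k + 1) • b, k • b)` lets us keep adding
`2 • b, …, (m - 1) • b`: the blowup produces `b ::ₘ k • b ::ₘ …`, which collapses back, and
`(k + 1) • b ::ₘ -b ::ₘ …`, which vanishes by (V) since `b` is still present. The length grows by
`m - 1 < ℓ`, so we stay in `SC_n(G)`, and the final symbol contains `(m - 1) • b` and `b`,
whose sum is zero, so it vanishes by (V). -/

open CBG

theorem MonoidHom.orderOf_dvd_exponent {A B : Type*} [Monoid A] [CommMonoid B] (χ : A →* B) :
    orderOf χ ∣ Monoid.exponent A :=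
  orderOf_dvd_of_pow_eq_one <| MonoidHom.ext fun a => by
    rw [MonoidHom.pow_apply, ← map_pow, Monoid.pow_exponent_eq_one, map_one, MonoidHom.one_apply]

theorem Monoid.exponent_le_of_forall_orderOf_le {M : Type*} [CommMonoid M]
    (hM : Monoid.ExponentExists M) {ℓ : ℕ} (h : ∀ g : M, orderOf g ≤ ℓ) :
    Monoid.exponent M ≤ ℓ := by
  obtain ⟨g, hg⟩ := Monoid.exists_orderOf_eq_exponent hM
  exact hg ▸ h g

open scoped IsMulCommutative in
theorem Subgroup.exponent_le_of_forall_orderOf_le {G : Type*} [Group G] {ℓ : ℕ}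
    (hℓ : ∀ g : G, orderOf g ≤ ℓ) (H : Subgroup G) [IsMulCommutative H] [Finite H] :
    Monoid.exponent H ≤ ℓ :=
  Monoid.exponent_le_of_forall_orderOf_le Monoid.ExponentExists.of_finite fun h =>
    Subgroup.orderOf_coe h ▸ hℓ h

namespace CBG

theorem addOrderOf_dvd_exponent {A : Type*} [Group A] (b : Ch A) :
    addOrderOf b ∣ Monoid.exponent A :=
  (addOrderOf_ofMul_eq_orderOf (Additive.toMul b)).symm ▸ (Additive.toMul b).orderOf_dvd_exponent

def multiplesUpTo {A : Type*} [AddMonoid A] (b : A) (k : ℕ) : Multiset A :=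
  (Multiset.range k).map fun i => (i + 1) • b

section multiplesUpTo

variable {A : Type*} [AddMonoid A] (b : A)

@[simp]
theorem multiplesUpTo_zero : multiplesUpTo b 0 = 0 := rfl

theorem multiplesUpTo_succ (k : ℕ) :
    multiplesUpTo b (k + 1) = (k + 1) • b ::ₘ multiplesUpTo b k := by
  simp [multiplesUpTo, Multiset.range_succ]

@[simp]
theorem card_multiplesUpTo (k : ℕ) : Multiset.card (multiplesUpTo b k) = k := by
  simp [multiplesUpTo]

theorem ne_zero_of_mem_multiplesUpTo {k : ℕ} (hk : k < addOrderOf b) {c : A}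
    (hc : c ∈ multiplesUpTo b k) : c ≠ 0 := by
  obtain ⟨i, hi, rfl⟩ := Multiset.mem_map.1 hc
  exact nsmul_ne_zero_of_lt_addOrderOf i.succ_ne_zero (by simp at hi; omega)

end multiplesUpTo

variable {G : Type*} [Group G] {n : ℕ}

variable (G n) in
def IsSymbolData (H Y : Subgroup G) (β : Multiset (Ch H)) : Prop :=
  IsMulCommutative H ∧ H ≤ Y ∧ Y ≤ Subgroup.centralizer (H : Set G) ∧
    1 ≤ Multiset.card β ∧ Multiset.card β ≤ n ∧ (∀ b ∈ β, b ≠ 0) ∧ gens β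

def IsSymbolData.toSymbol {H Y : Subgroup G} {β : Multiset (Ch H)}
    (h : IsSymbolData G n H Y β) : Symbol G n :=
  ⟨H, Y, h.1, h.2.1, h.2.2.1, β, h.2.2.2.1, h.2.2.2.2.1, h.2.2.2.2.2.1, h.2.2.2.2.2.2⟩

theorem mkSC_eq_single {H Y : Subgroup G} {β : Multiset (Ch H)} (h : IsSymbolData G n H Y β) :
    mkSC G n H Y β = Finsupp.single h.toSymbol 1 :=
  dif_pos h

theorem mkSC_eq_zero {H Y : Subgroup G} {β : Multiset (Ch H)} (h : ¬IsSymbolData G n H Y β) :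
    mkSC G n H Y β = 0 :=
  dif_neg h

theorem Symbol.isSymbolData (s : Symbol G n) : IsSymbolData G n s.H s.Y s.β :=
  ⟨s.habelian, s.hHY, s.hYC, s.hcard₁, s.hcard₂, s.hne, s.hgen⟩

theorem mkSC_symbol (s : Symbol G n) : mkSC G n s.H s.Y s.β = Finsupp.single s 1 := by
  rw [mkSC_eq_single s.isSymbolData]
  rfl

theorem Symbol.isSymbolData_of_subset (s : Symbol G n) {γ : Multiset (Ch s.H)} (hsub : s.β ⊆ γ)
    (hne : ∀ c ∈ γ, c ≠ 0) (hcard : Multiset.card γ ≤ n) : IsSymbolData G n s.H s.Y γ := by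
  obtain ⟨b, hb⟩ := Multiset.card_pos_iff_exists_mem.1 s.hcard₁
  refine ⟨s.habelian, s.hHY, s.hYC, Multiset.card_pos_iff_exists_mem.2 ⟨b, hsub hb⟩, hcard, hne, ?_⟩
  exact eq_top_iff.2 (s.hgen ▸ AddSubgroup.closure_mono fun c hc => hsub hc)

theorem BCmk_eq_zero_of_mem {x : SC G n} (hx : x ∈ relC G n ∪ relV G n ∪ relB2 G n) :
    BCmk G n x = 0 :=
  (Submodule.Quotient.mk_eq_zero _).2 (Submodule.subset_span hx)

section Relations

variable {H Y : Subgroup G} {a b : Ch H} {γ : Multiset (Ch H)}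

theorem BCmk_mkSC_cons_eq_zero (hb : b ∈ γ) (hab : a + b = 0) :
    BCmk G n (mkSC G n H Y (a ::ₘ γ)) = 0 := by
  by_cases h : IsSymbolData G n H Y (a ::ₘ γ)
  · rw [mkSC_eq_single h]
    refine BCmk_eq_zero_of_mem (Or.inl (Or.inr ⟨h.toSymbol, Or.inr ?_, rfl⟩))
    exact ⟨a, b, γ.erase b, congrArg _ (Multiset.cons_erase hb).symm, hab⟩
  · rw [mkSC_eq_zero h, map_zero]

theorem BCmk_mkSC_cons_of_mem (h : IsSymbolData G n H Y (b ::ₘ γ)) (hb : b ∈ γ) :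
    BCmk G n (mkSC G n H Y (b ::ₘ γ)) = BCmk G n (mkSC G n H Y γ) := by
  have hrel : Finsupp.single h.toSymbol 1 - mkSC G n H Y γ ∈ relB2 G n :=
    ⟨h.toSymbol, b, b, γ.erase b, congrArg _ (Multiset.cons_erase hb).symm,
      Or.inl ⟨rfl, congrArg (_ - mkSC G n H Y ·) (Multiset.cons_erase hb).symm⟩⟩
  rw [mkSC_eq_single h, ← sub_eq_zero, ← map_sub]
  exact BCmk_eq_zero_of_mem (Or.inr hrel)

theorem BCmk_mkSC_blowup {b₁ b₂ : Ch H} (h : IsSymbolData G n H Y (b₁ ::ₘ b₂ ::ₘ γ))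
    (h₁₂ : b₁ ≠ b₂) (hc : ∃ c ∈ b₁ ::ₘ b₂ ::ₘ γ, c ∈ AddSubgroup.zmultiples (b₁ - b₂)) :
    BCmk G n (mkSC G n H Y (b₁ ::ₘ b₂ ::ₘ γ)) =
      BCmk G n (mkSC G n H Y ((b₁ - b₂) ::ₘ b₂ ::ₘ γ)) +
        BCmk G n (mkSC G n H Y (b₁ ::ₘ (b₂ - b₁) ::ₘ γ)) := by
  have hrel : Finsupp.single h.toSymbol 1 - mkSC G n H Y ((b₁ - b₂) ::ₘ b₂ ::ₘ γ)
      - mkSC G n H Y (b₁ ::ₘ (b₂ - b₁) ::ₘ γ) ∈ relB2 G n :=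
    ⟨h.toSymbol, b₁, b₂, γ, rfl, Or.inr (Or.inl ⟨h₁₂, hc, rfl⟩)⟩
  rw [mkSC_eq_single h, ← sub_eq_zero, ← sub_sub, ← map_sub, ← map_sub]
  exact BCmk_eq_zero_of_mem (Or.inr hrel)

end Relations

section Chain

variable (s : Symbol G n)

theorem BCmk_mkSC_add_cons_cons {a b : Ch s.H} {γ : Multiset (Ch s.H)} (hsub : s.β ⊆ γ)
    (hb : b ∈ γ) (ha : a ≠ 0) (hab : a + b ≠ 0) (hne : ∀ c ∈ γ, c ≠ 0)
    (hcard : Multiset.card γ + 2 ≤ n) :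
    BCmk G n (mkSC G n s.H s.Y ((a + b) ::ₘ a ::ₘ γ)) =
      BCmk G n (mkSC G n s.H s.Y (a ::ₘ γ)) := by
  have hb0 : b ≠ 0 := hne b hb
  have valid : ∀ c, c ≠ 0 → IsSymbolData G n s.H s.Y (c ::ₘ a ::ₘ γ) := fun c hc =>
    s.isSymbolData_of_subset (fun x hx => by simp [hsub hx])
      (by simp only [Multiset.mem_cons]; rintro x (rfl | rfl | hx); exacts [hc, ha, hne x hx])
      (by simp only [Multiset.card_cons]; omega)
  have hdiff : a + b - a = b := by abel
  have hdiff' : a - (a + b) = -b := by abel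
  have hblow := BCmk_mkSC_blowup (valid _ hab)
    (fun h => hb0 (by rw [← hdiff, h]; exact sub_self a))
    ⟨b, by simp [hb], by rw [hdiff]; exact AddSubgroup.mem_zmultiples b⟩
  rw [hdiff, hdiff'] at hblow
  have hsplit : BCmk G n (mkSC G n s.H s.Y ((a + b) ::ₘ -b ::ₘ γ)) = 0 := by
    rw [Multiset.cons_swap]
    exact BCmk_mkSC_cons_eq_zero (Multiset.mem_cons_of_mem hb) (neg_add_cancel b)
  rw [hblow, hsplit, add_zero,
    BCmk_mkSC_cons_of_mem (valid _ hb0) (Multiset.mem_cons_of_mem hb)]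

theorem BCmk_single_eq_mkSC_multiplesUpTo {b : Ch s.H} (hb : b ∈ s.β) (k : ℕ)
    (hk : k + 1 < addOrderOf b) (hcard : k + 1 + Multiset.card s.β ≤ n) :
    BCmk G n (Finsupp.single s 1) =
      BCmk G n (mkSC G n s.H s.Y (multiplesUpTo b (k + 1) + s.β)) := by
  have hsub : ∀ j, s.β ⊆ multiplesUpTo b j + s.β := fun j c hc => Multiset.mem_add.2 (Or.inr hc)
  induction k with
  | zero =>
    have h : IsSymbolData G n s.H s.Y (b ::ₘ s.β) :=
      s.isSymbolData_of_subset (fun c hc => Multiset.mem_cons_of_mem hc)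
        (by simpa using ⟨s.hne b hb, s.hne⟩) (by rw [Multiset.card_cons]; omega)
    simp only [zero_add, multiplesUpTo_succ, multiplesUpTo_zero, one_nsmul, Multiset.cons_add]
    rw [BCmk_mkSC_cons_of_mem h hb, mkSC_symbol]
  | succ k ih =>
    have hne : ∀ c ∈ multiplesUpTo b k + s.β, c ≠ 0 := by
      intro c hc
      rcases Multiset.mem_add.1 hc with hc | hc
      · exact ne_zero_of_mem_multiplesUpTo b (by omega) hc
      · exact s.hne c hc
    have hW : ∀ j, multiplesUpTo b (j + 1) + s.β = (j + 1) • b ::ₘ (multiplesUpTo b j + s.β) :=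
      fun j => by rw [multiplesUpTo_succ, Multiset.cons_add]
    rw [ih (by omega) (by omega), hW (k + 1), hW k, succ_nsmul b (k + 1),
      BCmk_mkSC_add_cons_cons s (hsub k) (Multiset.mem_add.2 (Or.inr hb))
        (nsmul_ne_zero_of_lt_addOrderOf (by omega) (by omega))
        (succ_nsmul b (k + 1) ▸ nsmul_ne_zero_of_lt_addOrderOf (by omega) hk) hne
        (by simp only [Multiset.card_add, card_multiplesUpTo]; omega)]

theorem BCmk_single_eq_zero_of_mem {b : Ch s.H} (hb : b ∈ s.β) (hm : 0 < addOrderOf b)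
    (hcard : addOrderOf b + Multiset.card s.β ≤ n + 1) :
    BCmk G n (Finsupp.single s 1) = 0 := by
  have hm1 : addOrderOf b ≠ 1 := fun h => s.hne b hb (AddMonoid.addOrderOf_eq_one_iff.1 h)
  obtain ⟨k, hk⟩ : ∃ k, addOrderOf b = k + 2 := ⟨addOrderOf b - 2, by omega⟩
  have hsum : (k + 1) • b + b = 0 := by rw [← succ_nsmul, ← hk, addOrderOf_nsmul_eq_zero]
  rw [BCmk_single_eq_mkSC_multiplesUpTo s hb k (by omega) (by omega), multiplesUpTo_succ,
    Multiset.cons_add]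
  exact BCmk_mkSC_cons_eq_zero (Multiset.mem_add.2 (Or.inr hb)) hsum

end Chain

end CBG

/-- Let `G` be a finite group and `ℓ` the maximal order of an element of `G`.  Then for
every `n`, every generating symbol `(H, Y, β)` of `SC_n(G)` with `r(β) ≤ n - ℓ` has
vanishing class in `BC_n(G)`; in particular, the submodule `BC_{n,r}(G) ⊆ BC_n(G)`
generated by (classes of) reduced symbols with `r(β) ≤ r` vanishes for all
`1 ≤ r ≤ n - ℓ`. -/
theorem BC_symbol_short_vanishes (G : Type*) [Group G] [Fintype G]
    (ℓ : ℕ) (hℓ : IsGreatest (Set.range fun g : G => orderOf g) ℓ) (n : ℕ) :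
    (∀ s : Symbol G n, Multiset.card s.β ≤ n - ℓ →
      BCmk G n (Finsupp.single s 1) = 0) ∧
    (∀ r : ℕ, 1 ≤ r → r ≤ n - ℓ →
      Submodule.span ℤ {x : BC G n | ∃ s : Symbol G n,
        s.β.Nodup ∧ Multiset.card s.β ≤ r ∧ x = BCmk G n (Finsupp.single s 1)} = ⊥) := by
  have short : ∀ s : Symbol G n, Multiset.card s.β ≤ n - ℓ →
      BCmk G n (Finsupp.single s 1) = 0 := by
    intro s hcard
    have := s.habelian
    obtain ⟨b, hb⟩ := Multiset.card_pos_iff_exists_mem.1 s.hcard₁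
    have hexp := (Monoid.ExponentExists.of_finite (G := s.H)).exponent_pos
    have hdvd := addOrderOf_dvd_exponent b
    have hbℓ : addOrderOf b ≤ ℓ :=
      (Nat.le_of_dvd hexp hdvd).trans
        (s.H.exponent_le_of_forall_orderOf_le (fun g => hℓ.2 ⟨g, rfl⟩))
    have hr := s.hcard₁
    exact BCmk_single_eq_zero_of_mem s hb (Nat.pos_of_dvd_of_pos hdvd hexp) (by omega)
  refine ⟨short, fun r _ hr => ?_⟩
  rw [Submodule.span_eq_bot]
  rintro x ⟨s, -, hcard, rfl⟩
  exact short s (hcard.trans hr)
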